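/- If i ∈ T_n contains no good block, i.e., contains no occurrence of the pattern (1,...,1,0) arising as image of a bad block—equivalently, if i has no occurrence of a maximal block (1^{ℓ-1}, 0)—then the class I_i = {η ∈ A^n : Π(η) = Π(i)} equals the singleton {i}. -/

import Mathlib

/-- The alphabet `A = {0, 1, 3}`. -/
def A : Set ℕ := {0, 1, 3}

/-- The natural projection `Π(i) = Σ_{k=1}^n i_k 3^{-(k-1)}`. -/
noncomputable def proj : List ℕ → ℝ
  | [] => 0
  | a :: t => (a : ℝ) + proj t / 3

/-- `T_n`: words of length `n` over `A` containing no consecutive pair `(0,3)`. -/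
def Tset (n : ℕ) : Set (List ℕ) :=
  {l | l.length = n ∧ (∀ x ∈ l, x ∈ A) ∧ ¬ [0, 3] <:+: l}

lemma mem_A_cases {x : ℕ} (hx : x ∈ A) : x = 0 ∨ x = 1 ∨ x = 3 := by
  simpa [A] using hx

lemma proj_nonneg (l : List ℕ) : 0 ≤ proj l := by
  induction l with
  | nil => simp [proj]
  | cons a t ih =>
    have : (0:ℝ) ≤ (a:ℝ) := Nat.cast_nonneg a
    simp only [proj]; linarith

lemma proj_le (l : List ℕ) (h : ∀ x ∈ l, x ∈ A) : proj l ≤ 9/2 := by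
  induction l with
  | nil => norm_num [proj]
  | cons a t ih =>
    have ha : (a:ℝ) ≤ 3 := by
      rcases mem_A_cases (h a List.mem_cons_self) with h' | h' | h' <;>
        simp [h']
    have ht := ih (fun x hx => h x (List.mem_cons_of_mem a hx))
    simp only [proj]; linarith

lemma infix_of_tail {u : List ℕ} {b : ℕ} {s : List ℕ} (h : u <:+: s) :
    u <:+: b :: s := by
  obtain ⟨p, q, rfl⟩ := h
  exact ⟨b :: p, q, rfl⟩

/-- Key lemma: if `1 :: s` avoids `(1,0)`, no word `t` over `A` of the same length
as `s` satisfies `proj t = 3 + proj s`. -/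
lemma no_shift (s : List ℕ) : ∀ t : List ℕ, (∀ x ∈ s, x ∈ A) →
    (∀ x ∈ t, x ∈ A) → t.length = s.length → ¬ [1, 0] <:+: (1 :: s) →
    proj t ≠ 3 + proj s := by
  induction s with
  | nil =>
    intro t _ _ hlen _
    have : t = [] := List.length_eq_zero_iff.mp hlen
    subst this
    simp [proj]
  | cons c s' ih =>
    intro t hs ht hlen hgood heq
    -- c ≠ 0
    have hc : c ∈ A := hs c List.mem_cons_self
    have hc0 : c ≠ 0 := by
      rintro rfl
      exact hgood ⟨[], s', rfl⟩
    -- t is nonempty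
    cases t with
    | nil => simp at hlen
    | cons d t' =>
      have hd : d ∈ A := ht d List.mem_cons_self
      have hd3 : (d:ℝ) ≤ 3 := by
        rcases mem_A_cases hd with h' | h' | h' <;> simp [h']
      have ht' : ∀ x ∈ t', x ∈ A := fun x hx => ht x (List.mem_cons_of_mem d hx)
      have hs' : ∀ x ∈ s', x ∈ A := fun x hx => hs x (List.mem_cons_of_mem c hx)
      have hlent' : t'.length = s'.length := by simpa using hlen
      have hbt' := proj_le t' ht'
      have hbt'0 := proj_nonneg t'
      have hbs'0 := proj_nonneg s'
      simp only [proj] at heq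
      rcases mem_A_cases hc with h' | h' | h'
      · exact hc0 h'
      · -- c = 1 : forced d = 3, then recurse
        subst h'
        have hd3' : d = 3 := by
          rcases mem_A_cases hd with h'' | h'' | h''
          · exfalso; rw [h''] at heq; push_cast at heq; linarith
          · exfalso; rw [h''] at heq; push_cast at heq; linarith
          · exact h''
        subst hd3'
        have heq' : proj t' = 3 + proj s' := by push_cast at heq; linarith
        have hgood' : ¬ [1, 0] <:+: (1 :: s') := by
          intro h
          exact hgood (infix_of_tail h)
        exact ih t' hs' ht' hlent' hgood' heq'
      · -- c = 3 : proj too large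
        subst h'
        push_cast at heq
        linarith

/-- Main uniqueness lemma. -/
lemma main_unique (i : List ℕ) : ∀ η : List ℕ, (∀ x ∈ i, x ∈ A) →
    (∀ x ∈ η, x ∈ A) → η.length = i.length → ¬ [0, 3] <:+: i →
    ¬ [1, 0] <:+: i → proj η = proj i → η = i := by
  induction i with
  | nil =>
    intro η _ _ hlen _ _ _
    exact List.length_eq_zero_iff.mp hlen
  | cons b s ih =>
    intro η hi hη hlen h03 h10 heq
    cases η with
    | nil => simp at hlen
    | cons a t =>
      have hb : b ∈ A := hi b List.mem_cons_self
      have ha : a ∈ A := hη a List.mem_cons_self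
      have hs : ∀ x ∈ s, x ∈ A := fun x hx => hi x (List.mem_cons_of_mem b hx)
      have ht : ∀ x ∈ t, x ∈ A := fun x hx => hη x (List.mem_cons_of_mem a hx)
      have hlen' : t.length = s.length := by simpa using hlen
      have h03' : ¬ [0, 3] <:+: s := fun h => h03 (infix_of_tail h)
      have h10' : ¬ [1, 0] <:+: s := fun h => h10 (infix_of_tail h)
      have hbt := proj_le t ht
      have hbs := proj_le s hs
      have hbt0 := proj_nonneg t
      have hbs0 := proj_nonneg s
      simp only [proj] at heq
      have hsame : a = b → a :: t = b :: s := by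
        rintro rfl
        have : proj t = proj s := by linarith
        rw [ih t hs ht hlen' h03' h10' this]
      rcases mem_A_cases ha with ha' | ha' | ha' <;>
        rcases mem_A_cases hb with hb' | hb' | hb'
      · exact hsame (ha'.trans hb'.symm)
      · -- a = 0, b = 1 : proj t = 3 + proj s, contradiction via no_shift
        exfalso
        subst ha'; subst hb'
        have heq' : proj t = 3 + proj s := by push_cast at heq; linarith
        have h10'' : ¬ [1, 0] <:+: (1 :: s) := h10
        exact no_shift s t hs ht hlen' h10'' heq'
      · exfalso; subst ha'; subst hb'; push_cast at heq; linarith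
      · -- a = 1, b = 0 : proj s = 3 + proj t, but s can't start with 3
        exfalso
        subst ha'; subst hb'
        have heq' : proj s = 3 + proj t := by push_cast at heq; linarith
        cases s with
        | nil => simp [proj] at heq'; linarith
        | cons c s' =>
          have hc : c ∈ A := hs c List.mem_cons_self
          have hc3 : c ≠ 3 := by
            rintro rfl
            exact h03 ⟨[], s', rfl⟩
          have hc1 : (c:ℝ) ≤ 1 := by
            rcases mem_A_cases hc with h' | h' | h'
            · simp [h']
            · simp [h']
            · exact absurd h' hc3
          have hbs' := proj_le s' (fun x hx => hs x (List.mem_cons_of_mem c hx))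
          simp only [proj] at heq'
          linarith
      · exact hsame (ha'.trans hb'.symm)
      · exfalso; subst ha'; subst hb'; push_cast at heq; linarith
      · exfalso; subst ha'; subst hb'; push_cast at heq; linarith
      · exfalso; subst ha'; subst hb'; push_cast at heq; linarith
      · exact hsame (ha'.trans hb'.symm)

/-- If `i ∈ T_n` has no good block — equivalently, no occurrence of the consecutive
pair `(1,0)` — then the fiber `I_i = {η ∈ A^n : Π(η) = Π(i)}` equals `{i}`. -/
theorem stmt_10 (n : ℕ) (i : List ℕ) (hi : i ∈ Tset n)
    (hgood : ¬ [1, 0] <:+: i) :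
    {η : List ℕ | η.length = n ∧ (∀ x ∈ η, x ∈ A) ∧ proj η = proj i} = {i} := by
  obtain ⟨hlen, hA, h03⟩ := hi
  ext η
  simp only [Set.mem_setOf_eq, Set.mem_singleton_iff]
  constructor
  · rintro ⟨h1, h2, h3⟩
    exact main_unique i η hA h2 (h1.trans hlen.symm) h03 hgood h3
  · rintro rfl
    exact ⟨hlen, hA, rfl⟩
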